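/- Let f₁, ..., f_m: ℝⁿ → ℝ be L-smooth (each gradient L_i-Lipschitz, L = max L_i). Suppose at iteration k of direct multisearch all poll points fail sufficient decrease, i.e., for every d ∈ D_k with ‖d‖ = 1 there exists an index i (depending on d) with f_i(x_k + α_k d) ≥ f_i(x_k) - ρ(α_k). Then the approximate Pareto stationarity measure μ_{D_k}(x_k) = -min_{d ∈ D_k} max_i ⟨∇f_i(x_k), d⟩ satisfies μ_{D_k}(x_k) ≤ α_k·L/2 + ρ(α_k)/α_k. -/

import Mathlib

local notation "⟪" x ", " y "⟫" => @inner ℝ _ _ x y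

/-!
For each poll direction `d`, some objective `fᵢ` does not decrease by more than `ρ(α)` along the
step `α • d`, while the descent lemma bounds that decrease from below by
`-α ⟪∇fᵢ(x), d⟫ - α² L / 2`. Hence `⟪∇fᵢ(x), d⟫ ≥ -(α L / 2 + ρ(α) / α)`, which bounds the
maximum over `i` for every `d`, and so the minimum over `d`.
-/

section DescentLemma

variable {E : Type*} [NormedAddCommGroup E] [NormedSpace ℝ E]

theorem hasDerivAt_comp_add_smul {f : E → ℝ} {f' : E → StrongDual ℝ E}
    (hf : ∀ y, HasFDerivAt f (f' y) y) (x v : E) (t : ℝ) :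
    HasDerivAt (fun s : ℝ => f (x + s • v)) (f' (x + t • v) v) t := by
  have hline : HasDerivAt (fun s : ℝ => x + s • v) v t := by
    simpa using ((hasDerivAt_id t).smul_const v).const_add x
  exact (hf _).comp_hasDerivAt t hline

/-- The descent lemma. -/
theorem le_add_fderiv_add_of_lipschitz_fderiv {f : E → ℝ} {f' : E → StrongDual ℝ E} {L : ℝ}
    (hf : ∀ y, HasFDerivAt f (f' y) y) (hlip : ∀ y z, ‖f' y - f' z‖ ≤ L * ‖y - z‖) (x v : E) :
    f (x + v) ≤ f x + f' x v + L / 2 * ‖v‖ ^ 2 := by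
  -- the gap between the quadratic model and `f` along the ray `x + t • v` grows for `t ≥ 0`
  set φ : ℝ → ℝ := fun t => L * ‖v‖ ^ 2 / 2 * t ^ 2 - f (x + t • v) + f' x v * t
  have hφ : ∀ t, HasDerivAt φ (L * ‖v‖ ^ 2 * t - (f' (x + t • v) - f' x) v) t := by
    intro t
    have := (((hasDerivAt_pow 2 t).const_mul (L * ‖v‖ ^ 2 / 2)).sub
      (hasDerivAt_comp_add_smul hf x v t)).add ((hasDerivAt_id t).const_mul (f' x v))
    exact this.congr_deriv (by simp; ring)
  have hφ_nonneg : ∀ t, 0 ≤ t → 0 ≤ L * ‖v‖ ^ 2 * t - (f' (x + t • v) - f' x) v := by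
    intro t ht
    rw [sub_nonneg]
    calc (f' (x + t • v) - f' x) v ≤ ‖f' (x + t • v) - f' x‖ * ‖v‖ :=
          (le_abs_self _).trans ((f' (x + t • v) - f' x).le_opNorm v)
      _ ≤ L * ‖t • v‖ * ‖v‖ := by
          gcongr
          simpa using hlip (x + t • v) x
      _ = L * ‖v‖ ^ 2 * t := by
          rw [norm_smul, Real.norm_of_nonneg ht]
          ring
  have hmono : MonotoneOn φ (Set.Ici 0) :=
    monotoneOn_of_hasDerivWithinAt_nonneg (convex_Ici 0)
      (fun t _ => (hφ t).continuousAt.continuousWithinAt)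
      (fun t _ => (hφ t).hasDerivWithinAt)
      (fun t ht => hφ_nonneg t (interior_subset ht))
  have h01 : φ 0 ≤ φ 1 := hmono Set.self_mem_Ici (Set.mem_Ici.2 zero_le_one) zero_le_one
  simp only [φ, zero_smul, one_smul, add_zero] at h01
  linarith

end DescentLemma

section Gradient

variable {E : Type*} [NormedAddCommGroup E] [InnerProductSpace ℝ E] [CompleteSpace E]

theorem le_add_inner_gradient_add_of_lipschitz_gradient {f : E → ℝ} {g : E → E} {L : ℝ}
    (hf : ∀ y, HasGradientAt f (g y) y) (hlip : ∀ y z, ‖g y - g z‖ ≤ L * ‖y - z‖) (x v : E) :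
    f (x + v) ≤ f x + ⟪g x, v⟫ + L / 2 * ‖v‖ ^ 2 := by
  refine le_add_fderiv_add_of_lipschitz_fderiv hf (fun y z => ?_) x v
  rw [← map_sub, LinearIsometryEquiv.norm_map]
  exact hlip y z

theorem neg_le_inner_gradient_of_sufficient_decrease_fails {f : E → ℝ} {g : E → E} {L : ℝ}
    (hf : ∀ y, HasGradientAt f (g y) y) (hlip : ∀ y z, ‖g y - g z‖ ≤ L * ‖y - z‖)
    {x d : E} (hd : ‖d‖ = 1) {α r : ℝ} (hα : 0 < α) (hfail : f x - r ≤ f (x + α • d)) :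
    -(α * L / 2 + r / α) ≤ ⟪g x, d⟫ := by
  have hdesc := le_add_inner_gradient_add_of_lipschitz_gradient hf hlip x (α • d)
  rw [real_inner_smul_right, norm_smul, hd, Real.norm_of_nonneg hα.le, mul_one] at hdesc
  rw [neg_le, ← sub_nonneg]
  have key : 0 ≤ α * (α * L / 2 + ⟪g x, d⟫) + r := by linarith
  calc (0 : ℝ) ≤ (α * (α * L / 2 + ⟪g x, d⟫) + r) / α := div_nonneg key hα.le
    _ = α * L / 2 + r / α - -⟪g x, d⟫ := by field_simp; ring

end Gradient

theorem stmt16_general {n m : ℕ} (hm : 0 < m)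
    (f : Fin m → EuclideanSpace ℝ (Fin n) → ℝ)
    (g : Fin m → EuclideanSpace ℝ (Fin n) → EuclideanSpace ℝ (Fin n))
    (L : ℝ)
    (hgrad : ∀ i y, HasGradientAt (f i) (g i y) y)
    (hlip : ∀ i y z, ‖g i y - g i z‖ ≤ L * ‖y - z‖)
    (x : EuclideanSpace ℝ (Fin n)) (α : ℝ) (hα : 0 < α)
    (D : Finset (EuclideanSpace ℝ (Fin n))) (hD : D.Nonempty)
    (hunit : ∀ d ∈ D, ‖d‖ = 1)
    (ρ : ℝ → ℝ)
    (hfail : ∀ d ∈ D, ∃ i : Fin m, f i x - ρ α ≤ f i (x + α • d)) :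
    -(D.inf' hD fun d =>
        (Finset.univ : Finset (Fin m)).sup' ⟨⟨0, hm⟩, Finset.mem_univ _⟩
          fun i => ⟪g i x, d⟫) ≤ α * L / 2 + ρ α / α := by
  rw [neg_le]
  refine Finset.le_inf' _ _ fun d hd => ?_
  obtain ⟨i, hi⟩ := hfail d hd
  have hslope := neg_le_inner_gradient_of_sufficient_decrease_fails (hgrad i) (hlip i)
    (hunit d hd) hα hi
  exact hslope.trans (Finset.le_sup' (fun j => ⟪g j x, d⟫) (Finset.mem_univ i))

/-- direct multisearch unsuccessful-iteration bound. If every poll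
point fails sufficient decrease for at least one objective component, then the
approximate Pareto stationarity measure
`μ_{D_k}(x_k) = -min_{d ∈ D_k} max_i ⟪∇f_i(x_k), d⟫` satisfies
`μ_{D_k}(x_k) ≤ α_k L / 2 + ρ(α_k)/α_k`. -/
theorem stmt16 {n m : ℕ} (hm : 0 < m)
    (f : Fin m → EuclideanSpace ℝ (Fin n) → ℝ)
    (g : Fin m → EuclideanSpace ℝ (Fin n) → EuclideanSpace ℝ (Fin n))
    (L : ℝ) (hL : 0 ≤ L)
    (hgrad : ∀ i y, HasGradientAt (f i) (g i y) y)
    (hlip : ∀ i y z, ‖g i y - g i z‖ ≤ L * ‖y - z‖)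
    (x : EuclideanSpace ℝ (Fin n)) (α : ℝ) (hα : 0 < α)
    (D : Finset (EuclideanSpace ℝ (Fin n))) (hD : D.Nonempty)
    (hunit : ∀ d ∈ D, ‖d‖ = 1)
    (ρ : ℝ → ℝ) (hρ : ∀ a, 0 ≤ ρ a)
    (hfail : ∀ d ∈ D, ∃ i : Fin m, f i x - ρ α ≤ f i (x + α • d)) :
    -(D.inf' hD fun d =>
        (Finset.univ : Finset (Fin m)).sup' ⟨⟨0, hm⟩, Finset.mem_univ _⟩
          fun i => ⟪g i x, d⟫) ≤ α * L / 2 + ρ α / α :=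
  stmt16_general hm f g L hgrad hlip x α hα D hD hunit ρ hfail
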